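/- arXiv:1310.3130 — 4 statements merged into one kernel-verified Lean document; each statement's English description precedes it below -/
import Mathlib

section
/- Fix r > 1. Then as N → ∞ through the positive integers, ( (∫_{N r²}^∞ t^{N−1} e^{−t} dt) / (N−1)! ) · √(2πN) (r² − 1) e^{N(r²−1)} r^{−2N} → 1. Equivalently, the Γ = 2 soft-disk density satisfies ρ_N(√N r) ∼ e^{−N(r²−1)} e^{2N log r} / (π √(2πN) (r² − 1)) as N → ∞. -/
open MeasureTheory Real Filter Set Topology

/-!
Substituting `t = a + s` with `a = N c`, `c = r²`, gives
`∫_a^∞ t^(N-1) e^(-t) dt = a^(N-1) e^(-a) ∫_0^∞ (1 + s/a)^(N-1) e^(-s) ds`.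
The last integrand is dominated by its pointwise limit `e^(-(1 - 1/c) s)`, integrable as `c > 1`,
so by dominated convergence the integral tends to `c/(c - 1)`. Stirling's formula
`N! ~ √(2πN) (N/e)^N` absorbs the remaining prefactor.
-/

lemma tendsto_one_add_div_pow_pred_exp (x : ℝ) :
    Tendsto (fun N : ℕ => (1 + x / N) ^ (N - 1)) atTop (𝓝 (exp x)) := by
  have hbase : Tendsto (fun N : ℕ => 1 + x / N) atTop (𝓝 1) := by
    simpa using (tendsto_const_div_atTop_nhds_zero_nat x).const_add 1
  have hratio := (tendsto_one_add_div_pow_exp x).div hbase one_ne_zero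
  rw [div_one] at hratio
  refine hratio.congr' ?_
  filter_upwards [hbase.eventually_ne one_ne_zero, eventually_ge_atTop 1] with N hne hN
  rw [Pi.div_apply, pow_sub₀ _ hne hN, pow_one, div_eq_mul_inv]

lemma one_add_div_pow_pred_le_exp {x : ℝ} (hx : 0 ≤ x) (N : ℕ) :
    (1 + x / N) ^ (N - 1) ≤ exp x := calc
  (1 + x / N) ^ (N - 1) ≤ (1 + x / N) ^ N :=
    pow_le_pow_right₀ (le_add_of_nonneg_right (by positivity)) (Nat.sub_le N 1)
  _ ≤ exp x := by
    simpa [sub_eq_add_neg, neg_div] using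
      one_sub_div_pow_le_exp_neg (n := N) (t := -x) (by linarith [N.cast_nonneg (α := ℝ)])

lemma integral_Ioi_pow_mul_exp_neg_eq (n : ℕ) {a : ℝ} (ha : 0 < a) :
    ∫ t in Ioi a, t ^ n * exp (-t) =
      a ^ n * exp (-a) * ∫ s in Ioi 0, (1 + s / a) ^ n * exp (-s) := by
  have hpre : (· + a) ⁻¹' Ioi a = Ioi 0 := by ext; simp
  rw [← (measurePreserving_add_right volume a).setIntegral_preimage_emb
      (measurableEmbedding_addRight a), hpre, ← integral_const_mul]
  refine integral_congr_ae (ae_of_all _ fun s => ?_)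
  have hshift : s + a = a * (1 + s / a) := by field_simp; ring
  simp only [neg_add, exp_add]
  rw [hshift, mul_pow]
  ring

lemma tendsto_integral_one_add_div_pow_pred_mul_exp_neg {c : ℝ} (hc : 1 < c) :
    Tendsto (fun N : ℕ => ∫ s in Ioi 0, (1 + s / (N * c)) ^ (N - 1) * exp (-s))
      atTop (𝓝 (c / (c - 1))) := by
  have hc0 : 0 < c := by linarith
  set b := (c - 1) / c with hb_def
  have hb : 0 < b := div_pos (by linarith) hc0
  have hexp : ∀ s, exp (s / c) * exp (-s) = exp (-b * s) := fun s => by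
    rw [← exp_add, hb_def]; congr 1; field_simp; ring
  have hJ : Tendsto (fun N : ℕ => ∫ s in Ioi 0, (1 + s / (N * c)) ^ (N - 1) * exp (-s))
      atTop (𝓝 (∫ s in Ioi 0, exp (-b * s))) := by
    refine tendsto_integral_of_dominated_convergence (fun s => exp (-b * s))
      (fun N => by fun_prop) (exp_neg_integrableOn_Ioi 0 hb) (fun N => ?_) ?_
    · filter_upwards [ae_restrict_mem measurableSet_Ioi] with s (hs : 0 < s)
      rw [norm_of_nonneg (by positivity), ← hexp, div_mul_eq_div_div_swap]
      exact mul_le_mul_of_nonneg_right (one_add_div_pow_pred_le_exp (by positivity) N)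
        (exp_pos _).le
    · refine ae_of_all _ fun s => ?_
      simp_rw [← hexp, div_mul_eq_div_div_swap]
      exact (tendsto_one_add_div_pow_pred_exp (s / c)).mul_const _
  have hval : ∫ s in Ioi 0, exp (-b * s) = c / (c - 1) := by
    rw [integral_exp_mul_Ioi (neg_lt_zero.mpr hb) 0, mul_zero, exp_zero, hb_def]
    field_simp
  rwa [hval] at hJ

lemma tendsto_sqrt_pi_div_stirlingSeq :
    Tendsto (fun N : ℕ => √π / Stirling.stirlingSeq N) atTop (𝓝 1) := by
  have hpi : √π ≠ 0 := sqrt_ne_zero'.mpr pi_pos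
  have h := (tendsto_const_nhds (x := √π)).div Stirling.tendsto_stirlingSeq_sqrt_pi hpi
  rwa [div_self hpi] at h

lemma integral_Ioi_pow_pred_mul_exp_neg_div_factorial_mul_eq {N : ℕ} (hN : 1 ≤ N) {c : ℝ}
    (hc : 0 < c) :
    (∫ t in Ioi (N * c), t ^ (N - 1) * exp (-t)) / (N - 1).factorial *
        (√(2 * π * N) * (c - 1) * exp (N * (c - 1)) / c ^ N) =
      (∫ s in Ioi 0, (1 + s / (N * c)) ^ (N - 1) * exp (-s)) * ((c - 1) / c) *
        (√π / Stirling.stirlingSeq N) := by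
  have hN0 : (0 : ℝ) < N := by exact_mod_cast hN
  have hfactorial : (N.factorial : ℝ) = N * (N - 1).factorial := by
    exact_mod_cast (Nat.mul_factorial_pred (by omega)).symm
  have hpow : ∀ x : ℝ, x ^ N = x ^ (N - 1) * x := fun x => by
    rw [← pow_succ, Nat.sub_add_cancel hN]
  have hsqrt : √(2 * π * N) = √π * √(2 * N) := by
    rw [mul_assoc, mul_left_comm, sqrt_mul pi_pos.le]
  have hexp : exp (N * (c - 1)) = exp (N * c) * (exp N)⁻¹ := by
    rw [← exp_neg, ← exp_add]; ring_nf
  rw [integral_Ioi_pow_mul_exp_neg_eq _ (by positivity), Stirling.stirlingSeq, div_pow,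
    exp_one_pow, hfactorial, hpow, hpow N, mul_pow, hsqrt, hexp, exp_neg]
  field_simp

lemma tendsto_integral_Ioi_pow_pred_mul_exp_neg_div_factorial_mul {c : ℝ} (hc : 1 < c) :
    Tendsto (fun N : ℕ => (∫ t in Ioi (N * c), t ^ (N - 1) * exp (-t)) / (N - 1).factorial *
        (√(2 * π * N) * (c - 1) * exp (N * (c - 1)) / c ^ N)) atTop (𝓝 1) := by
  have hlimit := ((tendsto_integral_one_add_div_pow_pred_mul_exp_neg hc).mul_const
    ((c - 1) / c)).mul tendsto_sqrt_pi_div_stirlingSeq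
  rw [div_mul_div_cancel₀ (by linarith), div_self (by linarith), mul_one] at hlimit
  refine hlimit.congr' ?_
  filter_upwards [eventually_ge_atTop 1] with N hN
  rw [integral_Ioi_pow_pred_mul_exp_neg_div_factorial_mul_eq hN (by linarith)]

lemma density_ratio_eq {r : ℝ} (hr : 0 < r) (N : ℕ) (I : ℝ) :
    (1 / π) * I / (N - 1).factorial /
        (exp (-N * (r ^ 2 - 1)) * exp (2 * N * log r) / (π * √(2 * π * N) * (r ^ 2 - 1))) =
      I / (N - 1).factorial *
        (√(2 * π * N) * (r ^ 2 - 1) * exp (N * (r ^ 2 - 1)) / r ^ (2 * N)) := by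
  have hlog : exp (2 * N * log r) = r ^ (2 * N) := by
    rw [← exp_log (pow_pos hr (2 * N)), log_pow]; push_cast; ring_nf
  rw [hlog, neg_mul, exp_neg]
  field_simp

/-- Large-`N` asymptotics of the `Γ = 2` soft-disk density outside the droplet. -/
theorem soft_disk_density_asymptotics (r : ℝ) (hr : 1 < r) :
    Tendsto
      (fun N : ℕ =>
        ((∫ t in Set.Ioi ((N : ℝ) * r ^ 2), t ^ (N - 1) * Real.exp (-t)) /
            (Nat.factorial (N - 1) : ℝ)) *
          (Real.sqrt (2 * Real.pi * N) * (r ^ 2 - 1) * Real.exp ((N : ℝ) * (r ^ 2 - 1)) /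
            r ^ (2 * N)))
      atTop (nhds 1)
    ∧
    Tendsto
      (fun N : ℕ =>
        ((1 / Real.pi) * (∫ t in Set.Ioi ((N : ℝ) * r ^ 2), t ^ (N - 1) * Real.exp (-t)) /
            (Nat.factorial (N - 1) : ℝ)) /
          (Real.exp (-(N : ℝ) * (r ^ 2 - 1)) * Real.exp (2 * N * Real.log r) /
            (Real.pi * Real.sqrt (2 * Real.pi * N) * (r ^ 2 - 1))))
      atTop (nhds 1) := by
  have hfirst := tendsto_integral_Ioi_pow_pred_mul_exp_neg_div_factorial_mul
    (one_lt_pow₀ hr two_ne_zero)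
  simp_rw [← pow_mul] at hfirst
  exact ⟨hfirst, by simpa only [density_ratio_eq (zero_lt_one.trans hr)] using hfirst⟩
end

section
/- Fix y < 0. Let S_N(y) = Σ_{a=0}^{N−1} e^{4πy(a+1/2)} e^{−2π(a+1/2)²/N} and g(y) = e^{2πy}/(1 − e^{4πy}). Then lim_{N→∞} N (S_N(y) − g(y)) = −2π Σ_{a=0}^∞ (a+1/2)² e^{4πy(a+1/2)}. Consequently the Γ = 2 soft-cylinder density ρ_N(√N y) = √(2/N) e^{−2πN y²} S_N(y) satisfies √(N/2) e^{2πN y²} ρ_N(√N y) = g(y) − (2π/N) Σ_{a=0}^∞ (a+1/2)² e^{4πy(a+1/2)} + o(1/N) as N → ∞. -/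
/-!
Write `E a = exp (4πy(a + 1/2))` and `c a = 2π(a + 1/2)²`. Since `y < 0`, `E` is a geometric
series with sum `g(y)`, so `N (S_N - g) = ∑ₐ N (𝟙[a < N] E a exp (-c a / N) - E a)`. Each term
tends to `-c a E a`, and is bounded by `c a E a`: for `a < N` because `1 - x ≤ exp (-x)`, and for
`a ≥ N` because `N ≤ a ≤ c a`. Dominated convergence for series (Tannery's theorem) gives the limit.
The prefactors of the rescaled density cancel exactly, so the `o(1/N)` expansion is the limit
divided by `N`.
-/

open Real Filter Asymptotics Topology

lemma tendsto_nat_mul_exp_neg_div_sub_one (c : ℝ) :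
    Tendsto (fun N : ℕ => (N : ℝ) * (exp (-c / N) - 1)) atTop (𝓝 (-c)) := by
  have hderiv : HasDerivAt (fun t => exp (-c * t)) (-c) 0 := by
    simpa using ((hasDerivAt_id (0 : ℝ)).const_mul (-c)).exp
  have hinv : Tendsto (fun N : ℕ => (N : ℝ)⁻¹) atTop (𝓝[>] 0) :=
    tendsto_inv_atTop_nhdsGT_zero.comp tendsto_natCast_atTop_atTop
  refine (hderiv.tendsto_slope_zero_right.comp hinv).congr fun N => ?_
  simp [div_eq_mul_inv]

lemma abs_nat_mul_exp_neg_div_sub_one_le {c : ℝ} (hc : 0 ≤ c) (N : ℕ) :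
    |(N : ℝ) * (exp (-c / N) - 1)| ≤ c := by
  rcases N.eq_zero_or_pos with rfl | hN
  · simpa using hc
  have hN : (0 : ℝ) < N := by exact_mod_cast hN
  have hx : 0 ≤ c / N := by positivity
  have hlow : 1 - c / N ≤ exp (-c / N) := by simpa [neg_div] using one_sub_le_exp_neg (c / N)
  have hup : exp (-c / N) ≤ 1 := by rw [exp_le_one_iff, neg_div]; linarith
  rw [abs_mul, Nat.abs_cast, abs_of_nonpos (by linarith)]
  calc (N : ℝ) * -(exp (-c / N) - 1) ≤ N * (c / N) := by gcongr; linarith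
    _ = c := by field_simp

theorem tendsto_nat_mul_sum_range_exp_neg_div_sub_tsum {E c : ℕ → ℝ} (hE : ∀ a, 0 ≤ E a)
    (hc : ∀ a : ℕ, (a : ℝ) ≤ c a) (hcE : Summable fun a => c a * E a) :
    Tendsto (fun N : ℕ => (N : ℝ) * (∑ a ∈ Finset.range N, E a * exp (-c a / N) - ∑' a, E a))
      atTop (𝓝 (-∑' a, c a * E a)) := by
  have hc0 a : 0 ≤ c a := (Nat.cast_nonneg a).trans (hc a)
  have hEc a : a * E a ≤ c a * E a := mul_le_mul_of_nonneg_right (hc a) (hE a)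
  have hEsum : Summable E := hcE.of_norm_bounded_eventually_nat <|
    (eventually_ge_atTop 1).mono fun a ha => by
      rw [norm_of_nonneg (hE a)]
      exact le_trans (le_mul_of_one_le_left (hE a) (by exact_mod_cast ha)) (hEc a)
  let F (N a : ℕ) : ℝ := N * ((if a < N then E a * exp (-c a / N) else 0) - E a)
  have hF N : HasSum (F N) (N * (∑ a ∈ Finset.range N, E a * exp (-c a / N) - ∑' a, E a)) := by
    have htrunc : HasSum (fun a => if a < N then E a * exp (-c a / N) else 0)
        (∑ a ∈ Finset.range N, E a * exp (-c a / N)) := by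
      rw [← Finset.sum_congr rfl fun a ha => if_pos (Finset.mem_range.mp ha)]
      exact hasSum_sum_of_ne_finset_zero fun a ha => if_neg (by simpa using ha)
    exact (htrunc.sub hEsum.hasSum).mul_left (N : ℝ)
  have hlim a : Tendsto (F · a) atTop (𝓝 (-(c a * E a))) := by
    rw [neg_mul_eq_neg_mul, mul_comm]
    refine ((tendsto_nat_mul_exp_neg_div_sub_one (c a)).const_mul (E a)).congr' ?_
    filter_upwards [eventually_gt_atTop a] with N hN
    simp only [F, if_pos hN]
    ring
  have hbound N a : ‖F N a‖ ≤ c a * E a := by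
    rw [norm_eq_abs]
    by_cases h : a < N
    · rw [show F N a = N * (exp (-c a / N) - 1) * E a by simp only [F, if_pos h]; ring,
        abs_mul, abs_of_nonneg (hE a)]
      exact mul_le_mul_of_nonneg_right (abs_nat_mul_exp_neg_div_sub_one_le (hc0 a) N) (hE a)
    · rw [show F N a = -(N * E a) by simp only [F, if_neg h]; ring, abs_neg,
        abs_of_nonneg (mul_nonneg N.cast_nonneg (hE a))]
      exact (mul_le_mul_of_nonneg_right (by exact_mod_cast not_lt.mp h) (hE a)).trans (hEc a)
  have := tendsto_tsum_of_dominated_convergence hcE hlim (.of_forall hbound)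
  simpa only [tsum_neg, (hF _).tsum_eq] using this

lemma hasSum_exp_mul_add_half {t : ℝ} (ht : t < 0) :
    HasSum (fun a : ℕ => exp (t * (a + 1 / 2))) (exp (t / 2) / (1 - exp t)) := by
  have hterm : (fun a : ℕ => exp (t * (a + 1 / 2))) = fun a => exp (t / 2) * exp t ^ a := by
    ext a
    rw [← exp_nat_mul, ← exp_add]
    ring_nf
  rw [hterm, div_eq_mul_inv]
  exact (hasSum_geometric_of_lt_one (exp_pos t).le (exp_lt_one_iff.mpr ht)).mul_left _

lemma summable_add_half_sq_mul_exp_mul_add_half {t : ℝ} (ht : t < 0) :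
    Summable fun a : ℕ => ((a : ℝ) + 1 / 2) ^ 2 * exp (t * (a + 1 / 2)) := by
  have h k := summable_pow_mul_exp_neg_nat_mul k (neg_pos.mpr ht)
  have hterm : (fun a : ℕ => ((a : ℝ) + 1 / 2) ^ 2 * exp (t * (a + 1 / 2))) = fun a : ℕ =>
      exp (t / 2) * (((a : ℝ) ^ 2 * exp (- -t * a) + (a : ℝ) ^ 1 * exp (- -t * a)) +
        1 / 4 * ((a : ℝ) ^ 0 * exp (- -t * a))) := by
    ext a
    rw [neg_neg, show t * (a + 1 / 2) = t / 2 + t * a by ring, exp_add]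
    ring
  rw [hterm]
  exact (((h 2).add (h 1)).add ((h 0).mul_left _)).mul_left _

theorem tendsto_nat_mul_soft_cylinder_sum_sub {y : ℝ} (hy : y < 0) :
    Tendsto (fun N : ℕ => (N : ℝ) *
        (∑ a ∈ Finset.range N, exp (4 * π * y * ((a : ℝ) + 1 / 2)) *
            exp (-2 * π * ((a : ℝ) + 1 / 2) ^ 2 / N) -
          exp (2 * π * y) / (1 - exp (4 * π * y))))
      atTop (𝓝 (-2 * π * ∑' a : ℕ, ((a : ℝ) + 1 / 2) ^ 2 * exp (4 * π * y * ((a : ℝ) + 1 / 2)))) := by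
  have ht : 4 * π * y < 0 := by nlinarith [pi_pos]
  have hc (a : ℕ) : (a : ℝ) ≤ 2 * π * ((a : ℝ) + 1 / 2) ^ 2 := by
    nlinarith [pi_gt_three, sq_nonneg ((a : ℝ) - 1 / 2)]
  have := tendsto_nat_mul_sum_range_exp_neg_div_sub_tsum
    (E := fun a : ℕ => exp (4 * π * y * (a + 1 / 2))) (fun a => (exp_pos _).le) hc
    (by simpa only [mul_assoc] using
      (summable_add_half_sq_mul_exp_mul_add_half ht).mul_left (2 * π))
  rw [(hasSum_exp_mul_add_half ht).tsum_eq] at this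
  simp only [mul_assoc (2 * π), tsum_mul_left] at this
  convert this using 4 with N
  · simp only [neg_mul, neg_div]
  · ring_nf
  · ring

lemma isLittleO_one_div_of_tendsto_nat_mul_sub {u : ℕ → ℝ} {g L : ℝ}
    (h : Tendsto (fun N : ℕ => (N : ℝ) * (u N - g)) atTop (𝓝 L)) :
    (fun N : ℕ => u N - (g + L / N)) =o[atTop] fun N : ℕ => 1 / (N : ℝ) := by
  have hN : ∀ᶠ N : ℕ in atTop, (N : ℝ) ≠ 0 :=
    (eventually_ge_atTop 1).mono fun N hN => by positivity
  rw [isLittleO_iff_tendsto' (hN.mono fun N hN h => absurd h (by positivity))]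
  refine (sub_self L ▸ h.sub_const L).congr' (hN.mono fun N hN => ?_)
  field_simp
  ring

/-- Finite-`N` correction to the `Γ = 2` soft-cylinder edge density outside the droplet. -/
theorem soft_cylinder_density_correction (y : ℝ) (hy : y < 0) :
    Tendsto
      (fun N : ℕ =>
        (N : ℝ) *
          ((∑ a ∈ Finset.range N,
              Real.exp (4 * Real.pi * y * ((a : ℝ) + 1 / 2)) *
                Real.exp (-2 * Real.pi * ((a : ℝ) + 1 / 2) ^ 2 / N)) -
            Real.exp (2 * Real.pi * y) / (1 - Real.exp (4 * Real.pi * y))))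
      atTop
      (nhds (-2 * Real.pi *
        ∑' a : ℕ, ((a : ℝ) + 1 / 2) ^ 2 * Real.exp (4 * Real.pi * y * ((a : ℝ) + 1 / 2))))
    ∧
    (fun N : ℕ =>
        Real.sqrt ((N : ℝ) / 2) * Real.exp (2 * Real.pi * N * y ^ 2) *
          (Real.sqrt (2 / (N : ℝ)) * Real.exp (-2 * Real.pi * N * y ^ 2) *
            ∑ a ∈ Finset.range N,
              Real.exp (4 * Real.pi * y * ((a : ℝ) + 1 / 2)) *
                Real.exp (-2 * Real.pi * ((a : ℝ) + 1 / 2) ^ 2 / N)) -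
          (Real.exp (2 * Real.pi * y) / (1 - Real.exp (4 * Real.pi * y)) -
            (2 * Real.pi / N) *
              ∑' a : ℕ, ((a : ℝ) + 1 / 2) ^ 2 * Real.exp (4 * Real.pi * y * ((a : ℝ) + 1 / 2))))
      =o[atTop] (fun N : ℕ => 1 / (N : ℝ)) := by
  have hlim := tendsto_nat_mul_soft_cylinder_sum_sub hy
  refine ⟨hlim, (isLittleO_one_div_of_tendsto_nat_mul_sub hlim).congr' ?_ .rfl⟩
  filter_upwards [eventually_gt_atTop 0] with N hN
  have hsqrt : sqrt ((N : ℝ) / 2) * sqrt (2 / N) = 1 := by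
    rw [← sqrt_mul (by positivity), show (N : ℝ) / 2 * (2 / N) = 1 by field_simp, sqrt_one]
  have hexp : exp (2 * π * N * y ^ 2) * exp (-2 * π * N * y ^ 2) = 1 := by
    rw [← exp_add, ← exp_zero]; ring_nf
  set S := ∑ a ∈ Finset.range N,
    exp (4 * π * y * ((a : ℝ) + 1 / 2)) * exp (-2 * π * ((a : ℝ) + 1 / 2) ^ 2 / N)
  linear_combination (-S * exp (2 * π * N * y ^ 2) * exp (-2 * π * N * y ^ 2)) * hsqrt - S * hexp
end

section
/- There exist constants C > 0 and y₀ < 0 such that for all y ≤ y₀, | A₁(y) − ( −(1/(8√(2π))) e^{−2y²}/|y| + (1/(16π√2)) e^{−2y²}/y² + (1/(32√(2π))) e^{−2y²}/|y|³ ) | ≤ C e^{−2y²}/y⁴; that is, A₁(y) = −(1/(8√(2π))) e^{−2y²}/|y| + (1/(16π√2)) e^{−2y²}/y² + (1/(32√(2π))) e^{−2y²}/|y|³ + O(y^{−4} e^{−2y²}) as y → −∞. -/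
/-!
Completing the square, `exp (-2 (t - y)²) = exp (-2 y²) · exp (4 y t) · exp (-2 t²)`, so `A₁ y` is
`exp (-2 y²)` times the Laplace transform at `a = -4 y` of `f t = exp (-2 t²) · erfc t`. On `[0, ∞)`
we have `f t = 1 - (2/√π) t - 2 t² + O(t³ + t⁴ + t⁵)`, with explicit constants coming from the
Taylor bounds of `exp` and of the integrand of `erf`. Integrating term by term against `exp (-a t)`,
using `∫₀^∞ tⁿ exp (-a t) dt = n! / a^(n+1)`, gives the three main terms with an error `O(a⁻⁴)`.
-/

open MeasureTheory Real Filter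

/-- The error function `erf`. -/
noncomputable def erf (x : ℝ) : ℝ := (2 / Real.sqrt Real.pi) * ∫ t in (0 : ℝ)..x, Real.exp (-t ^ 2)

/-- The complementary error function `erfc`. -/
noncomputable def erfc (x : ℝ) : ℝ := 1 - erf x

noncomputable def A₁ (y : ℝ) : ℝ :=
  -(1 / (2 * Real.sqrt (2 * Real.pi))) *
    ∫ t in Set.Ioi (0 : ℝ), Real.exp (-2 * (t - y) ^ 2) * erfc t

noncomputable def A₂ (y : ℝ) : ℝ :=
  (1 / Real.sqrt (2 * Real.pi)) *
    ∫ t in Set.Ioi (0 : ℝ),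
      Real.exp (-2 * (t - y) ^ 2) * t * (Real.exp (-t ^ 2) / Real.sqrt Real.pi - t * erfc t)

noncomputable def A₃ (y : ℝ) : ℝ :=
  (1 / 4) * (1 + erf (Real.sqrt 2 * y)) *
    (-(y * Real.exp (-2 * y ^ 2)) / Real.sqrt (2 * Real.pi) +
      (1 / 4 + y ^ 2) * (1 - erf (Real.sqrt 2 * y)))

noncomputable def A₄ (y : ℝ) : ℝ :=
  -(1 / Real.sqrt (2 * Real.pi)) *
    ∫ t₁ in Set.Ioi (0 : ℝ), ∫ t₂ in Set.Ioo (0 : ℝ) t₁,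
      (1 / (t₁ - t₂)) *
        (Real.exp (-2 * (t₁ - y) ^ 2) * (erf (t₁ - t₂) + erf (Real.sqrt 2 * (t₂ - y))) +
          Real.exp (-2 * (t₂ - y) ^ 2) * (erf (t₁ - t₂) - erf (Real.sqrt 2 * (t₁ - y))))

noncomputable def A (y : ℝ) : ℝ := A₁ y + A₂ y + A₃ y + A₄ y

open Set
open scoped Nat

lemma exp_neg_le_one_sub_add_sq_div_two {x : ℝ} (hx : 0 ≤ x) :
    exp (-x) ≤ 1 - x + x ^ 2 / 2 := by
  rw [exp_neg, inv_le_iff_one_le_mul₀ (exp_pos x)]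
  calc (1 : ℝ) ≤ (1 - x + x ^ 2 / 2) * (1 + x + x ^ 2 / 2) := by nlinarith [pow_nonneg hx 4]
    _ ≤ (1 - x + x ^ 2 / 2) * exp x := by
        gcongr
        · nlinarith
        · exact quadratic_le_exp_of_nonneg hx

section Laplace

variable {a : ℝ}

lemma integral_pow_mul_exp_neg_mul (n : ℕ) (ha : 0 < a) :
    ∫ t in Ioi (0 : ℝ), t ^ n * exp (-(a * t)) = n ! / a ^ (n + 1) := by
  have h := integral_rpow_mul_exp_neg_mul_Ioi (a := (n : ℝ) + 1) (by positivity) ha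
  simp_rw [add_sub_cancel_right, rpow_natCast, Gamma_nat_eq_factorial] at h
  rw [h, ← Nat.cast_succ, rpow_natCast, one_div, inv_pow]
  field_simp

lemma integrableOn_pow_mul_exp_neg_mul (n : ℕ) (ha : 0 < a) :
    IntegrableOn (fun t : ℝ ↦ t ^ n * exp (-(a * t))) (Ioi 0) :=
  .of_integral_ne_zero (by rw [integral_pow_mul_exp_neg_mul n ha]; positivity)

lemma integrableOn_sum_mul_pow_mul_exp_neg_mul {m : ℕ} (c : Fin m → ℝ) (ha : 0 < a) :
    IntegrableOn (fun t : ℝ ↦ (∑ i, c i * t ^ (i : ℕ)) * exp (-(a * t))) (Ioi 0) := by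
  simp_rw [Finset.sum_mul, mul_assoc]
  exact integrable_finsetSum _ fun (i : Fin m) _ ↦
    (integrableOn_pow_mul_exp_neg_mul i ha).const_mul (c i)

lemma integral_sum_mul_pow_mul_exp_neg_mul {m : ℕ} (c : Fin m → ℝ) (ha : 0 < a) :
    ∫ t in Ioi (0 : ℝ), (∑ i, c i * t ^ (i : ℕ)) * exp (-(a * t)) =
      ∑ i, c i * (i : ℕ)! / a ^ ((i : ℕ) + 1) := by
  simp_rw [Finset.sum_mul, mul_assoc]
  rw [integral_finsetSum _ fun (i : Fin m) _ ↦
    (integrableOn_pow_mul_exp_neg_mul i ha).const_mul (c i)]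
  simp_rw [integral_const_mul, integral_pow_mul_exp_neg_mul _ ha, mul_div_assoc]

/-- A quantitative Watson's lemma. -/
lemma abs_integral_mul_exp_neg_mul_sub_le {m n : ℕ} {f : ℝ → ℝ}
    (hf : AEStronglyMeasurable f (volume.restrict (Ioi 0))) (c : Fin m → ℝ) (d : Fin n → ℝ)
    (hfcd : ∀ t > 0, |f t - ∑ i, c i * t ^ (i : ℕ)| ≤ ∑ j, d j * t ^ (j : ℕ)) (ha : 0 < a) :
    |(∫ t in Ioi (0 : ℝ), f t * exp (-(a * t))) - ∑ i, c i * (i : ℕ)! / a ^ ((i : ℕ) + 1)| ≤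
      ∑ j, d j * (j : ℕ)! / a ^ ((j : ℕ) + 1) := by
  have hp := integrableOn_sum_mul_pow_mul_exp_neg_mul c ha
  have hq := integrableOn_sum_mul_pow_mul_exp_neg_mul d ha
  have hdiff : ∀ t > 0, ‖f t * exp (-(a * t)) - (∑ i, c i * t ^ (i : ℕ)) * exp (-(a * t))‖ ≤
      (∑ j, d j * t ^ (j : ℕ)) * exp (-(a * t)) := fun t ht ↦ by
    rw [Real.norm_eq_abs, ← sub_mul, abs_mul, abs_of_pos (exp_pos _)]
    exact mul_le_mul_of_nonneg_right (hfcd t ht) (exp_pos _).le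
  have hdiff_int : IntegrableOn
      (fun t ↦ f t * exp (-(a * t)) - (∑ i, c i * t ^ (i : ℕ)) * exp (-(a * t))) (Ioi 0) := by
    refine hq.mono' ((hf.mul (by fun_prop)).sub hp.aestronglyMeasurable) ?_
    filter_upwards [ae_restrict_mem measurableSet_Ioi] with t ht using hdiff t ht
  have hf_int : IntegrableOn (fun t ↦ f t * exp (-(a * t))) (Ioi 0) :=
    (hdiff_int.add hp).congr_fun (fun t _ ↦ sub_add_cancel _ _) measurableSet_Ioi
  rw [← integral_sum_mul_pow_mul_exp_neg_mul c ha, ← integral_sum_mul_pow_mul_exp_neg_mul d ha,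
    ← integral_sub hf_int hp]
  exact (norm_integral_le_integral_norm _).trans (setIntegral_mono_on hdiff_int.norm hq
    measurableSet_Ioi fun t ht ↦ hdiff t ht)

end Laplace

@[fun_prop]
lemma continuous_erf : Continuous erf :=
  continuous_const.mul <| intervalIntegral.continuous_primitive
    (fun _ _ ↦ (by fun_prop : Continuous fun t : ℝ ↦ exp (-t ^ 2)).intervalIntegrable _ _) 0

section ErfBounds

variable {t : ℝ}

lemma erf_nonneg (ht : 0 ≤ t) : 0 ≤ erf t :=
  mul_nonneg (by positivity) (intervalIntegral.integral_nonneg ht fun _ _ ↦ (exp_pos _).le)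

lemma erf_le_one (ht : 0 ≤ t) : erf t ≤ 1 := by
  have hgauss : IntegrableOn (fun u : ℝ ↦ exp (-u ^ 2)) (Ioi 0) := by
    simpa using (integrable_exp_neg_mul_sq one_pos).integrableOn
  have hle : ∫ u in (0 : ℝ)..t, exp (-u ^ 2) ≤ ∫ u in Ioi (0 : ℝ), exp (-u ^ 2) := by
    rw [intervalIntegral.integral_of_le ht]
    exact setIntegral_mono_set hgauss (.of_forall fun _ ↦ (exp_pos _).le)
      Ioc_subset_Ioi_self.eventuallyLE
  have hval : ∫ u in Ioi (0 : ℝ), exp (-u ^ 2) = √π / 2 := by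
    simpa using integral_gaussian_Ioi 1
  rw [erf, div_mul_eq_mul_div, div_le_one (by positivity)]
  linarith

lemma erf_le_two_div_sqrt_pi_mul (ht : 0 ≤ t) : erf t ≤ 2 / √π * t := by
  have h : ∫ u in (0 : ℝ)..t, exp (-u ^ 2) ≤ ∫ _ in (0 : ℝ)..t, (1 : ℝ) :=
    intervalIntegral.integral_mono_on ht
      ((by fun_prop : Continuous fun u : ℝ ↦ exp (-u ^ 2)).intervalIntegrable _ _)
      intervalIntegrable_const fun u _ ↦ exp_le_one_iff.mpr (by nlinarith)
  rw [intervalIntegral.integral_const, smul_eq_mul, mul_one, sub_zero] at h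
  exact mul_le_mul_of_nonneg_left h (by positivity)

lemma two_div_sqrt_pi_mul_sub_le_erf (ht : 0 ≤ t) : 2 / √π * (t - t ^ 3 / 3) ≤ erf t := by
  have h : ∫ u in (0 : ℝ)..t, (1 - u ^ 2) ≤ ∫ u in (0 : ℝ)..t, exp (-u ^ 2) :=
    intervalIntegral.integral_mono_on ht
      ((by fun_prop : Continuous fun u : ℝ ↦ 1 - u ^ 2).intervalIntegrable _ _)
      ((by fun_prop : Continuous fun u : ℝ ↦ exp (-u ^ 2)).intervalIntegrable _ _) fun u _ ↦ by
        linarith [add_one_le_exp (-u ^ 2)]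
  have hval : ∫ u in (0 : ℝ)..t, (1 - u ^ 2) = t - t ^ 3 / 3 := by
    simp [intervalIntegral.integral_sub, integral_pow]
    ring
  rw [hval] at h
  exact mul_le_mul_of_nonneg_left h (by positivity)

end ErfBounds

lemma abs_exp_mul_erfc_sub_le {t : ℝ} (ht : 0 ≤ t) :
    |exp (-2 * t ^ 2) * erfc t - (1 - 2 / √π * t - 2 * t ^ 2)| ≤
      5 * t ^ 3 + 2 * t ^ 4 + 2 * t ^ 5 := by
  set b := 2 / √π
  have hb : b ≤ 2 := by
    have : 1 ≤ √π := one_le_sqrt.mpr (by linarith [pi_gt_three])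
    rw [div_le_iff₀ (by positivity)]
    linarith
  set s := exp (-2 * t ^ 2) - (1 - 2 * t ^ 2)
  set ρ := b * t - erf t
  have hs₀ : 0 ≤ s := by
    have := one_sub_le_exp_neg (2 * t ^ 2)
    rw [← neg_mul] at this
    linarith
  have hs₁ : s ≤ 2 * t ^ 4 := by
    have := exp_neg_le_one_sub_add_sq_div_two (by positivity : 0 ≤ 2 * t ^ 2)
    rw [← neg_mul] at this
    linarith
  have hρ₀ : 0 ≤ ρ := by linarith [erf_le_two_div_sqrt_pi_mul ht]
  have hρ₁ : ρ ≤ 2 / 3 * t ^ 3 := by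
    nlinarith [two_div_sqrt_pi_mul_sub_le_erf ht, pow_nonneg ht 3]
  have herf₀ := erf_nonneg ht
  have herf₁ := erf_le_one ht
  have hsplit : exp (-2 * t ^ 2) * erfc t - (1 - b * t - 2 * t ^ 2) =
      2 * b * t ^ 3 + (1 - 2 * t ^ 2) * ρ + s * (1 - erf t) := by
    simp only [erfc, s, ρ]
    ring
  rw [hsplit, abs_le]
  have hb₀ : 0 ≤ b := by positivity
  have ht₃ := pow_nonneg ht 3
  constructor <;> nlinarith [mul_nonneg hb₀ ht₃, mul_nonneg (sub_nonneg.mpr hb) ht₃,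
    mul_nonneg hs₀ herf₀, mul_nonneg hs₀ (sub_nonneg.mpr herf₁), mul_nonneg (sq_nonneg t) hρ₀,
    mul_le_mul_of_nonneg_left hρ₁ (sq_nonneg t)]

lemma A₁_eq_integral_mul_exp_neg_mul (y : ℝ) :
    A₁ y = -(1 / (2 * √(2 * π))) * exp (-2 * y ^ 2) *
      ∫ t in Ioi (0 : ℝ), exp (-2 * t ^ 2) * erfc t * exp (-(-4 * y * t)) := by
  rw [A₁, mul_assoc, ← integral_const_mul (exp (-2 * y ^ 2))]
  congr 1
  refine integral_congr_ae (.of_forall fun t ↦ ?_)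
  dsimp only
  rw [show -2 * (t - y) ^ 2 = -2 * y ^ 2 + -2 * t ^ 2 + -(-4 * y * t) by ring, exp_add, exp_add]
  ring

lemma A₁_main_terms_eq {y : ℝ} (hy : y < 0) :
    -(1 / (2 * √(2 * π))) * exp (-2 * y ^ 2) *
        ∑ i : Fin 3, ![1, -(2 / √π), -2] i * (i : ℕ)! / (-4 * y) ^ ((i : ℕ) + 1) =
      -(1 / (8 * √(2 * π))) * exp (-2 * y ^ 2) / |y| +
        (1 / (16 * π * √2)) * exp (-2 * y ^ 2) / y ^ 2 +
        (1 / (32 * √(2 * π))) * exp (-2 * y ^ 2) / |y| ^ 3 := by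
  have hπ : √π * √π = π := mul_self_sqrt pi_pos.le
  have hπ₀ : 0 < √π := sqrt_pos.mpr pi_pos
  simp [Fin.sum_univ_succ, Nat.factorial, abs_of_neg hy, sqrt_mul zero_le_two]
  set s := √π
  rw [← hπ]
  field_simp
  ring

lemma remainder_sum_le_of_four_le {a : ℝ} (ha : 4 ≤ a) :
    ∑ j : Fin 6, ![0, 0, 0, 5, 2, 2] j * (j : ℕ)! / a ^ ((j : ℕ) + 1) ≤ 57 / a ^ 4 := by
  have ha₀ : 0 < a := by linarith
  have hsum : ∑ j : Fin 6, ![0, 0, 0, 5, 2, 2] j * (j : ℕ)! / a ^ ((j : ℕ) + 1) =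
      (30 + 48 / a + 240 / a ^ 2) / a ^ 4 := by
    simp [Fin.sum_univ_succ, Nat.factorial]
    field_simp
    ring
  rw [hsum]
  gcongr
  have h₁ : 48 / a ≤ 12 := by rw [div_le_iff₀ ha₀]; linarith
  have h₂ : 240 / a ^ 2 ≤ 15 := by rw [div_le_iff₀ (by positivity)]; nlinarith
  linarith

/-- Asymptotic expansion of `A₁` as `y → −∞`. -/
theorem A1_asymptotics :
    ∃ C > (0 : ℝ), ∃ y₀ < (0 : ℝ), ∀ y ≤ y₀,
      |A₁ y -
          (-(1 / (8 * Real.sqrt (2 * Real.pi))) * Real.exp (-2 * y ^ 2) / |y| +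
            (1 / (16 * Real.pi * Real.sqrt 2)) * Real.exp (-2 * y ^ 2) / y ^ 2 +
            (1 / (32 * Real.sqrt (2 * Real.pi))) * Real.exp (-2 * y ^ 2) / |y| ^ 3)| ≤
        C * Real.exp (-2 * y ^ 2) / y ^ 4 := by
  refine ⟨1, one_pos, -1, by norm_num, fun y hy ↦ ?_⟩
  have hWatson := abs_integral_mul_exp_neg_mul_sub_le
    (f := fun t ↦ exp (-2 * t ^ 2) * erfc t) (by unfold erfc; fun_prop) ![1, -(2 / √π), -2]
    ![0, 0, 0, 5, 2, 2] (fun t ht ↦ by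
      convert abs_exp_mul_erfc_sub_le ht.le using 3 <;> simp [Fin.sum_univ_succ] <;> ring)
    (by linarith : 0 < -4 * y)
  have hK : 1 / (2 * √(2 * π)) ≤ 1 := by
    rw [div_le_one (by positivity)]
    nlinarith [one_le_sqrt.mpr (by nlinarith [pi_gt_three] : 1 ≤ 2 * π)]
  rw [A₁_eq_integral_mul_exp_neg_mul, ← A₁_main_terms_eq (by linarith), ← mul_sub, abs_mul,
    abs_mul, abs_neg, abs_of_pos (by positivity), abs_exp]
  calc 1 / (2 * √(2 * π)) * exp (-2 * y ^ 2) * |_|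
      ≤ 1 * exp (-2 * y ^ 2) * (57 / (-4 * y) ^ 4) := by
        gcongr
        exact hWatson.trans (remainder_sum_le_of_four_le (by linarith))
    _ ≤ 1 * exp (-2 * y ^ 2) * (1 / y ^ 4) := by
        refine mul_le_mul_of_nonneg_left ?_ (by positivity)
        have hy₄ : 0 < y ^ 4 := Even.pow_pos (by decide) (by linarith : y < 0).ne
        rw [div_le_div_iff₀ (by linarith [show (-4 * y) ^ 4 = 256 * y ^ 4 by ring]) hy₄]
        nlinarith
    _ = 1 * exp (-2 * y ^ 2) / y ^ 4 := by ring
end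

section
/- There exist constants C > 0 and y₀ < 0 such that for all y ≤ y₀, | A₃(y) − (1/(2√(2π))) |y| e^{−2y²} | ≤ C e^{−2y²}/|y|³; that is, A₃(y) = (1/(2√(2π))) |y| e^{−2y²} + O(y^{−3} e^{−2y²}) as y → −∞. -/
open MeasureTheory Real Filter

/-!
Put `x = √2 |y|`, so that `1 + erf (√2 y) = erfc x` for `y ≤ 0`. Then `A₃ y` minus the
leading term factors exactly as `(2 - erfc x) / 8` times the defect
`(x² + 1/2) erfc x - x e^{-x²} / √π`, and the first factor lies in `[1/8, 1/4]`.
The defect is `O(e^{-x²} / x³)` by the two-sided asymptotic bounds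
`e^{-x²}/(√π x) (1 - 1/(2x²)) ≤ erfc x ≤ e^{-x²}/(√π x) (1 - 1/(2x²) + 3/(4x⁴))`,
which come from comparing `∫ₓ^∞ e^{-t²} dt` with the explicit antiderivatives
`-e^{-t²} (1/(2t) - 1/(4t³))` and `-e^{-t²} (1/(2t) - 1/(4t³) + 3/(8t⁵))`
of `e^{-t²} (1 - 3/(4t⁴))` and `e^{-t²} (1 + 15/(8t⁶))`.
-/

open Set Topology

lemma integrable_exp_neg_sq : Integrable fun t : ℝ => exp (-t ^ 2) := by
  simpa using integrable_exp_neg_mul_sq one_pos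

lemma integrableOn_exp_neg_sq_div_pow {x : ℝ} (hx : 0 < x) (n : ℕ) :
    IntegrableOn (fun t => exp (-t ^ 2) / t ^ n) (Ioi x) := by
  refine (integrable_exp_neg_sq.integrableOn.const_mul (1 / x ^ n)).mono'
    (by fun_prop : Measurable _).aestronglyMeasurable ?_
  filter_upwards [ae_restrict_mem measurableSet_Ioi] with t (ht : x < t)
  have ht0 : 0 < t := hx.trans ht
  rw [norm_of_nonneg (by positivity), one_div_mul_eq_div]
  exact div_le_div_of_nonneg_left (exp_pos _).le (by positivity) (pow_le_pow_left₀ hx.le ht.le n)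

lemma integral_Ioi_eq_of_hasDerivAt_neg {F f : ℝ → ℝ} {x : ℝ}
    (hF : ∀ t ∈ Ici x, HasDerivAt F (-f t) t) (hf : IntegrableOn f (Ioi x))
    (hF_lim : Tendsto F atTop (𝓝 0)) :
    ∫ t in Ioi x, f t = F x := by
  simpa [integral_neg] using integral_Ioi_of_hasDerivAt_of_tendsto' hF hf.neg hF_lim

lemma hasDerivAt_exp_neg_sq_mul {p : ℝ → ℝ} {p' t : ℝ} (hp : HasDerivAt p p' t) :
    HasDerivAt (fun t => exp (-t ^ 2) * p t) (exp (-t ^ 2) * (p' - 2 * t * p t)) t := by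
  refine (((hasDerivAt_pow 2 t).fun_neg.exp).fun_mul hp).congr_deriv ?_
  push_cast
  ring

lemma hasDerivAt_one_div_mul_pow (c : ℝ) (n : ℕ) {t : ℝ} (ht : t ≠ 0) :
    HasDerivAt (fun t => 1 / (c * t ^ n)) (-n / (c * t ^ (n + 1))) t := by
  rcases eq_or_ne c 0 with rfl | hc
  · simpa using hasDerivAt_const t (0 : ℝ)
  simp only [one_div]
  refine (((hasDerivAt_pow n t).const_mul c).fun_inv (by positivity)).congr_deriv ?_
  rcases n with _ | n
  · simp
  rw [Nat.add_sub_cancel]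
  field_simp
  ring

lemma tendsto_exp_neg_sq_mul_atTop {p : ℝ → ℝ} (hp : Tendsto p atTop (𝓝 0)) :
    Tendsto (fun t => exp (-t ^ 2) * p t) atTop (𝓝 0) := by
  have hexp : Tendsto (fun t : ℝ => exp (-t ^ 2)) atTop (𝓝 0) :=
    tendsto_exp_atBot.comp (tendsto_neg_atTop_atBot.comp (tendsto_pow_atTop two_ne_zero))
  simpa using hexp.mul hp

lemma tendsto_one_div_mul_pow_atTop {c : ℝ} (hc : 0 < c) {n : ℕ} (hn : n ≠ 0) :
    Tendsto (fun t : ℝ => 1 / (c * t ^ n)) atTop (𝓝 0) :=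
  tendsto_const_nhds.div_atTop ((tendsto_pow_atTop hn).const_mul_atTop hc)

lemma exp_neg_sq_mul_le_integral_Ioi {x : ℝ} (hx : 0 < x) :
    exp (-x ^ 2) * (1 / (2 * x) - 1 / (4 * x ^ 3)) ≤ ∫ t in Ioi x, exp (-t ^ 2) := by
  have hderiv : ∀ t ∈ Ici x,
      HasDerivAt (fun t => exp (-t ^ 2) * (1 / (2 * t) - 1 / (4 * t ^ 3)))
      (-(exp (-t ^ 2) - 3 / 4 * (exp (-t ^ 2) / t ^ 4))) t := by
    intro t (ht : x ≤ t)
    have ht0 : t ≠ 0 := (hx.trans_le ht).ne'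
    have hp := (hasDerivAt_one_div_mul_pow 2 1 ht0).fun_sub (hasDerivAt_one_div_mul_pow 4 3 ht0)
    simp only [pow_one] at hp
    refine (hasDerivAt_exp_neg_sq_mul hp).congr_deriv ?_
    field_simp
    ring
  have hlim := tendsto_exp_neg_sq_mul_atTop <| by
    simpa only [pow_one, sub_zero] using (tendsto_one_div_mul_pow_atTop two_pos one_ne_zero).sub
      (tendsto_one_div_mul_pow_atTop four_pos three_ne_zero)
  have hint : IntegrableOn (fun t => exp (-t ^ 2) - 3 / 4 * (exp (-t ^ 2) / t ^ 4)) (Ioi x) :=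
    integrable_exp_neg_sq.integrableOn.sub ((integrableOn_exp_neg_sq_div_pow hx 4).const_mul _)
  rw [← integral_Ioi_eq_of_hasDerivAt_neg hderiv hint hlim]
  refine setIntegral_mono_on hint integrable_exp_neg_sq.integrableOn measurableSet_Ioi
    fun t ht => ?_
  have : 0 ≤ exp (-t ^ 2) / t ^ 4 := by positivity
  linarith

lemma integral_Ioi_le_exp_neg_sq_mul {x : ℝ} (hx : 0 < x) :
    ∫ t in Ioi x, exp (-t ^ 2) ≤
      exp (-x ^ 2) * (1 / (2 * x) - 1 / (4 * x ^ 3) + 3 / (8 * x ^ 5)) := by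
  have hderiv : ∀ t ∈ Ici x, HasDerivAt
      (fun t => exp (-t ^ 2) * (1 / (2 * t) - 1 / (4 * t ^ 3) + 3 / (8 * t ^ 5)))
      (-(exp (-t ^ 2) + 15 / 8 * (exp (-t ^ 2) / t ^ 6))) t := by
    intro t (ht : x ≤ t)
    have ht0 : t ≠ 0 := (hx.trans_le ht).ne'
    have hp := ((hasDerivAt_one_div_mul_pow 2 1 ht0).fun_sub
      (hasDerivAt_one_div_mul_pow 4 3 ht0)).fun_add
        ((hasDerivAt_one_div_mul_pow 8 5 ht0).const_mul 3)
    simp only [pow_one, mul_one_div] at hp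
    refine (hasDerivAt_exp_neg_sq_mul hp).congr_deriv ?_
    field_simp
    ring
  have hlim := tendsto_exp_neg_sq_mul_atTop <| by
    simpa only [pow_one, sub_zero, add_zero, mul_zero, mul_one_div] using
      ((tendsto_one_div_mul_pow_atTop two_pos one_ne_zero).sub
        (tendsto_one_div_mul_pow_atTop four_pos three_ne_zero)).add
      ((tendsto_one_div_mul_pow_atTop (c := 8) (n := 5) (by norm_num) (by norm_num)).const_mul 3)
  have hint : IntegrableOn (fun t => exp (-t ^ 2) + 15 / 8 * (exp (-t ^ 2) / t ^ 6)) (Ioi x) :=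
    integrable_exp_neg_sq.integrableOn.add ((integrableOn_exp_neg_sq_div_pow hx 6).const_mul _)
  rw [← integral_Ioi_eq_of_hasDerivAt_neg hderiv hint hlim]
  refine setIntegral_mono_on integrable_exp_neg_sq.integrableOn hint measurableSet_Ioi
    fun t ht => ?_
  have : 0 ≤ exp (-t ^ 2) / t ^ 6 := by positivity
  linarith

lemma erf_neg (x : ℝ) : erf (-x) = -erf x := by
  have h := intervalIntegral.integral_comp_neg (a := 0) (b := -x) fun t => exp (-t ^ 2)
  simp only [neg_sq, neg_neg, neg_zero] at h
  rw [erf, erf, h, intervalIntegral.integral_symm, mul_neg]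

lemma erfc_eq_integral_Ioi (x : ℝ) : erfc x = 2 / √π * ∫ t in Ioi x, exp (-t ^ 2) := by
  have hgauss : ∫ t in Ioi (0 : ℝ), exp (-t ^ 2) = √π / 2 := by
    simpa using integral_gaussian_Ioi 1
  have hsplit := intervalIntegral.integral_Ioi_sub_Ioi' (a := 0) (b := x)
    integrable_exp_neg_sq.integrableOn integrable_exp_neg_sq.integrableOn
  rw [erfc, erf, ← hsplit, hgauss]
  field_simp
  ring

lemma erfc_nonneg (x : ℝ) : 0 ≤ erfc x := by
  rw [erfc_eq_integral_Ioi]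
  exact mul_nonneg (by positivity)
    (setIntegral_nonneg measurableSet_Ioi fun t _ => (exp_pos _).le)

lemma erfc_le_one {x : ℝ} (hx : 0 ≤ x) : erfc x ≤ 1 := by
  have : 0 ≤ erf x :=
    mul_nonneg (by positivity) (intervalIntegral.integral_nonneg hx fun t _ => (exp_pos _).le)
  rw [erfc]
  linarith

lemma exp_neg_sq_div_mul_le_erfc {x : ℝ} (hx : 0 < x) :
    exp (-x ^ 2) / (√π * x) * (1 - 1 / (2 * x ^ 2)) ≤ erfc x := by
  rw [erfc_eq_integral_Ioi]
  calc exp (-x ^ 2) / (√π * x) * (1 - 1 / (2 * x ^ 2))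
      = 2 / √π * (exp (-x ^ 2) * (1 / (2 * x) - 1 / (4 * x ^ 3))) := by
        field_simp
        ring
    _ ≤ _ := by gcongr; exact exp_neg_sq_mul_le_integral_Ioi hx

lemma erfc_le_exp_neg_sq_div_mul {x : ℝ} (hx : 0 < x) :
    erfc x ≤ exp (-x ^ 2) / (√π * x) * (1 - 1 / (2 * x ^ 2) + 3 / (4 * x ^ 4)) := by
  rw [erfc_eq_integral_Ioi]
  calc 2 / √π * ∫ t in Ioi x, exp (-t ^ 2)
      ≤ 2 / √π * (exp (-x ^ 2) * (1 / (2 * x) - 1 / (4 * x ^ 3) + 3 / (8 * x ^ 5))) := by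
        gcongr; exact integral_Ioi_le_exp_neg_sq_mul hx
    _ = _ := by
        field_simp
        ring

lemma abs_sq_add_half_mul_erfc_sub_le {x : ℝ} (hx : 1 ≤ x) :
    |(x ^ 2 + 1 / 2) * erfc x - x * exp (-x ^ 2) / √π| ≤ exp (-x ^ 2) / (√π * x ^ 3) := by
  have hx0 : 0 < x := one_pos.trans_le hx
  set u := exp (-x ^ 2) / (√π * x) with hu
  have hlo := mul_le_mul_of_nonneg_left (exp_neg_sq_div_mul_le_erfc hx0)
    (by positivity : (0 : ℝ) ≤ x ^ 2 + 1 / 2)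
  have hhi := mul_le_mul_of_nonneg_left (erfc_le_exp_neg_sq_div_mul hx0)
    (by positivity : (0 : ℝ) ≤ x ^ 2 + 1 / 2)
  rw [← hu] at hlo hhi
  have hlo' : (x ^ 2 + 1 / 2) * (u * (1 - 1 / (2 * x ^ 2))) = x ^ 2 * u - u / x ^ 2 / 4 := by
    field_simp
    ring
  have hhi' : (x ^ 2 + 1 / 2) * (u * (1 - 1 / (2 * x ^ 2) + 3 / (4 * x ^ 4))) =
      x ^ 2 * u + u / x ^ 2 / 2 + 3 / 8 * (u / x ^ 2 / x ^ 2) := by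
    field_simp
    ring
  have hmain : x * exp (-x ^ 2) / √π = x ^ 2 * u := by
    rw [hu]; field_simp
  have hbound : exp (-x ^ 2) / (√π * x ^ 3) = u / x ^ 2 := by
    rw [hu]; field_simp
  have hv : 0 ≤ u / x ^ 2 := by positivity
  have hvx : u / x ^ 2 / x ^ 2 ≤ u / x ^ 2 := div_le_self hv (one_le_pow₀ hx)
  rw [hmain, hbound, abs_le]
  constructor <;> linarith

lemma A₃_neg_sub_eq (q : ℝ) :
    A₃ (-q) - 1 / (2 * √(2 * π)) * q * exp (-2 * q ^ 2) =
      (2 - erfc (√2 * q)) / 8 * (((√2 * q) ^ 2 + 1 / 2) * erfc (√2 * q) -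
        √2 * q * exp (-(√2 * q) ^ 2) / √π) := by
  have h2 : √2 ^ 2 = 2 := sq_sqrt zero_le_two
  have hsq : (√2 * q) ^ 2 = 2 * q ^ 2 := by rw [mul_pow, h2]
  have herf : erf (√2 * -q) = erfc (√2 * q) - 1 := by rw [mul_neg, erf_neg, erfc]; ring
  rw [A₃, herf, hsq, sqrt_mul zero_le_two, neg_sq, neg_mul]
  field_simp
  linear_combination 32 * (2 - erfc (√2 * q)) * q * exp (-(q ^ 2 * 2)) * h2

/-- `A₃(y) = (1/(2√(2π))) |y| e^{−2y²} + O(y^{−3} e^{−2y²})` as `y → −∞`. -/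
theorem A3_asymptotics :
    ∃ C > (0 : ℝ), ∃ y₀ < (0 : ℝ), ∀ y ≤ y₀,
      |A₃ y - (1 / (2 * Real.sqrt (2 * Real.pi))) * |y| * Real.exp (-2 * y ^ 2)| ≤
        C * Real.exp (-2 * y ^ 2) / |y| ^ 3 := by
  refine ⟨1 / (8 * √(2 * π)), by positivity, -1, by norm_num, fun y hy => ?_⟩
  obtain ⟨q, hq, rfl⟩ : ∃ q, 1 ≤ q ∧ y = -q := ⟨-y, by linarith, by ring⟩
  have hx : 1 ≤ √2 * q := one_le_mul_of_one_le_of_one_le (one_le_sqrt.2 one_le_two) hq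
  have hE := erfc_le_one (zero_le_one.trans hx)
  rw [abs_neg, abs_of_pos (one_pos.trans_le hq), neg_sq, A₃_neg_sub_eq, abs_mul,
    abs_of_nonneg (by linarith)]
  calc (2 - erfc (√2 * q)) / 8 * |((√2 * q) ^ 2 + 1 / 2) * erfc (√2 * q) -
          √2 * q * exp (-(√2 * q) ^ 2) / √π|
      ≤ 1 / 4 * (exp (-(√2 * q) ^ 2) / (√π * (√2 * q) ^ 3)) :=
        mul_le_mul (by linarith [erfc_nonneg (√2 * q)]) (abs_sq_add_half_mul_erfc_sub_le hx)
          (abs_nonneg _) (by norm_num)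
    _ = 1 / (8 * √(2 * π)) * exp (-2 * q ^ 2) / q ^ 3 := by
        have h2 : √2 ^ 2 = 2 := sq_sqrt zero_le_two
        rw [mul_pow, h2, sqrt_mul zero_le_two, neg_mul]
        field_simp
        ring_nf
        rw [h2]
        ring
end
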